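/- Let α, β be labels and σ' a list of labels such that (|σ'| -s ds {β}) ≼_mul {α}. Then there exist lists σ₁, σ₂, σ₃ with σ' = σ₁ ++ σ₂ ++ σ₃ such that every element of σ₁ lies in ds {β}, σ₂ has length at most 1 with every element equal to α, and every element of σ₃ lies in ds {α, β}. -/
import Mathlib


open Relation

universe u v

variable {α : Type u} {β : Type v}

/-- down-set of a set of labels -/
def ds (r : β → β → Prop) (S : Set β) : Set β := {b | ∃ a ∈ S, r b a}

/-- down-set of a multiset of labels -/
def dm (r : β → β → Prop) (M : Multiset β) : Set β := ds r {a | a ∈ M}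

/-- down-set of a list of labels -/
def dl (r : β → β → Prop) (σ : List β) : Set β := ds r {a | a ∈ σ}

/-- `M -s S`: remove from the multiset `M` all occurrences of elements of the set `S` -/
noncomputable def msub (M : Multiset β) (S : Set β) : Multiset β :=
  @Multiset.filter β (fun a => a ∉ S) (Classical.decPred _) M

/-- `M ≼_mul N` -/
def mulLe (r : β → β → Prop) (M N : Multiset β) : Prop :=
  ∃ I J K : Multiset β, M = I + K ∧ N = I + J ∧ ∀ k ∈ K, k ∈ dm r J

/-- `M ≺_mul N`: the multiset extension of `r` -/
def mulLt (r : β → β → Prop) (M N : Multiset β) : Prop :=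
  ∃ I J K : Multiset β, M = I + K ∧ N = I + J ∧ (∀ k ∈ K, k ∈ dm r J) ∧ J ≠ 0

/-- the one-step multiset extension of `r` -/
def mult1 (r : β → β → Prop) (M N : Multiset β) : Prop :=
  ∃ (a : β) (I K : Multiset β), M = I + K ∧ N = I + {a} ∧ ∀ b ∈ K, r b a

/-- the lexicographic maximum measure `|σ|` -/
noncomputable def lexmax (r : β → β → Prop) : List β → Multiset β
  | [] => 0
  | a :: σ => {a} + msub (lexmax r σ) (ds r {a})

/-- the quadruple of label lists `(τ, σ, σ', τ')` is decreasing -/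
def Decreasing (r : β → β → Prop) (τ σ σ' τ' : List β) : Prop :=
  mulLe r (lexmax r (σ ++ τ')) (lexmax r τ + lexmax r σ) ∧
  mulLe r (lexmax r (τ ++ σ')) (lexmax r τ + lexmax r σ)

/-- labeled rewrite sequences of the labeled ARS `B` -/
inductive LSeq (B : α → β → α → Prop) : α → List β → α → Prop
  | nil (a : α) : LSeq B a [] a
  | cons {a b c : α} {l : β} {σ : List β} :
      B a l b → LSeq B b σ c → LSeq B a (l :: σ) c

/-- labeled conversions of the labeled ARS `B` -/
inductive Conv (B : α → β → α → Prop) : α → List β → α → Prop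
  | nil (a : α) : Conv B a [] a
  | fwd {a b c : α} {l : β} {σ : List β} :
      B a l b → Conv B b σ c → Conv B a (l :: σ) c
  | bwd {a b c : α} {l : β} {σ : List β} :
      B b l a → Conv B b σ c → Conv B a (l :: σ) c

/-- the local peak `b ←lb a →lc c` is decreasing with respect to conversions -/
def LDConv (B : α → β → α → Prop) (r : β → β → Prop) (b c : α) (lb lc : β) : Prop :=
  ∃ (d b1 b2 c1 c2 : α) (σ1 σ3 τ1 τ3 : List β),
    Conv B b σ1 b1 ∧ (∀ l ∈ σ1, l ∈ ds r ({lc} : Set β)) ∧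
    (b1 = b2 ∨ B b1 lb b2) ∧
    Conv B b2 σ3 d ∧ (∀ l ∈ σ3, l ∈ ds r ({lc, lb} : Set β)) ∧
    Conv B c τ1 c1 ∧ (∀ l ∈ τ1, l ∈ ds r ({lb} : Set β)) ∧
    (c1 = c2 ∨ B c1 lc c2) ∧
    Conv B c2 τ3 d ∧ (∀ l ∈ τ3, l ∈ ds r ({lc, lb} : Set β))

/-- confluence of an abstract rewrite system -/
def Confluent (A : α → α → Prop) : Prop :=
  ∀ a b c : α, ReflTransGen A a b → ReflTransGen A a c →
    ∃ d, ReflTransGen A b d ∧ ReflTransGen A c d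

section Aux

variable {β : Type v} {r : β → β → Prop}

lemma mem_msub {M : Multiset β} {S : Set β} {x : β} :
    x ∈ msub M S ↔ x ∈ M ∧ x ∉ S := by
  simp [msub, Multiset.mem_filter]

lemma mem_ds_singleton {a x : β} : x ∈ ds r ({a} : Set β) ↔ r x a := by
  simp [ds]

lemma mem_ds_pair {a b x : β} : x ∈ ds r ({a, b} : Set β) ↔ r x a ∨ r x b := by
  simp [ds]

lemma msub_eq_zero {M : Multiset β} {S : Set β} :
    msub M S = 0 ↔ ∀ x ∈ M, x ∈ S := by
  constructor
  · intro h x hx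
    by_contra hxS
    have : x ∈ msub M S := mem_msub.mpr ⟨hx, hxS⟩
    simp [h] at this
  · intro h
    rw [Multiset.eq_zero_iff_forall_notMem]
    intro x hx
    rcases mem_msub.mp hx with ⟨hxM, hxS⟩
    exact hxS (h x hxM)

lemma msub_add (M N : Multiset β) (S : Set β) :
    msub (M + N) S = msub M S + msub N S := by
  simp [msub, Multiset.filter_add]

lemma msub_singleton_of_notMem {a : β} {S : Set β} (h : a ∉ S) :
    msub ({a} : Multiset β) S = {a} := by
  simp [msub, Multiset.filter_singleton, h]

lemma msub_singleton_of_mem {a : β} {S : Set β} (h : a ∈ S) :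
    msub ({a} : Multiset β) S = 0 := by
  simp [msub, Multiset.filter_singleton, h]

lemma msub_cons_of_mem {a : β} {M : Multiset β} {S : Set β} (h : a ∈ S) :
    msub (a ::ₘ M) S = msub M S := by
  unfold msub; exact @Multiset.filter_cons_of_neg _ _ (Classical.decPred _) _ _ (not_not_intro h)

lemma msub_cons_of_notMem {a : β} {M : Multiset β} {S : Set β} (h : a ∉ S) :
    msub (a ::ₘ M) S = a ::ₘ msub M S := by
  unfold msub; exact @Multiset.filter_cons_of_pos _ _ (Classical.decPred _) _ _ h

lemma msub_msub_of_subset {M : Multiset β} {S T : Set β} (h : S ⊆ T) :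
    msub (msub M S) T = msub M T := by
  induction M using Multiset.induction_on with
  | empty => simp [msub]
  | cons a M ih =>
    by_cases haS : a ∈ S
    · rw [msub_cons_of_mem haS, msub_cons_of_mem (h haS), ih]
    · rw [msub_cons_of_notMem haS]
      by_cases haT : a ∈ T
      · rw [msub_cons_of_mem haT, msub_cons_of_mem haT, ih]
      · rw [msub_cons_of_notMem haT, msub_cons_of_notMem haT, ih]

/-- dominance: every element of a list is equal to or below some element of
its lexicographic maximum measure -/
lemma lexmax_dom (htrans : Transitive r) :
    ∀ σ : List β, ∀ l ∈ σ, ∃ m ∈ lexmax r σ, l = m ∨ r l m := by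
  intro σ
  induction σ with
  | nil => simp
  | cons a σ0 ih =>
    intro l hl
    have hmema : a ∈ lexmax r (a :: σ0) := by
      simp [lexmax]
    rcases List.mem_cons.mp hl with rfl | hl
    · exact ⟨l, hmema, Or.inl rfl⟩
    · rcases ih l hl with ⟨m, hm, hlm⟩
      by_cases hma : m ∈ ds r ({a} : Set β)
      · refine ⟨a, hmema, Or.inr ?_⟩
        have hra : r m a := mem_ds_singleton.mp hma
        rcases hlm with rfl | hlm
        · exact hra
        · exact htrans hlm hra
      · refine ⟨m, ?_, hlm⟩
        have : m ∈ msub (lexmax r σ0) (ds r ({a} : Set β)) :=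
          mem_msub.mpr ⟨hm, hma⟩
        simp [lexmax, Multiset.mem_add, this]

/-- if every element of `lexmax σ` is in a downward-closed set then so is
every element of `σ` -/
lemma lexmax_dom_set (htrans : Transitive r) {σ : List β} {S : Set β}
    (h : ∀ x ∈ lexmax r σ, x ∈ ds r S) : ∀ l ∈ σ, l ∈ ds r S := by
  intro l hl
  rcases lexmax_dom htrans σ l hl with ⟨m, hm, hlm⟩
  rcases hlm with heq | hlm
  · exact heq ▸ h m hm
  · rcases h m hm with ⟨s, hs, hms⟩
    exact ⟨s, hs, htrans hlm hms⟩

lemma decomposition_of_eq_singleton (htrans : Transitive r)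
    (la lb : β) :
    ∀ σ' : List β,
    msub (lexmax r σ') (ds r ({lb} : Set β)) = ({la} : Multiset β) →
    ∃ σ1 σ3 : List β, σ' = σ1 ++ [la] ++ σ3 ∧
      (∀ l ∈ σ1, l ∈ ds r ({lb} : Set β)) ∧
      (∀ l ∈ σ3, l ∈ ds r ({la, lb} : Set β)) := by
  intro σ'
  induction σ' with
  | nil =>
    intro h
    simp [lexmax, msub] at h
  | cons a σ0 ih =>
    intro h
    have hlex : lexmax r (a :: σ0) = {a} + msub (lexmax r σ0) (ds r ({a} : Set β)) := rfl
    rw [hlex, msub_add] at h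
    by_cases ha : a ∈ ds r ({lb} : Set β)
    · -- `a` is filtered out; `ds r {a} ⊆ ds r {lb}`
      rw [msub_singleton_of_mem ha, zero_add] at h
      have hsub : ds r ({a} : Set β) ⊆ ds r ({lb} : Set β) := by
        intro x hx
        exact mem_ds_singleton.mpr
          (htrans (mem_ds_singleton.mp hx) (mem_ds_singleton.mp ha))
      rw [msub_msub_of_subset hsub] at h
      rcases ih h with ⟨σ1, σ3, heq, h1, h3⟩
      refine ⟨a :: σ1, σ3, by simp [heq], ?_, h3⟩
      intro l hl
      rcases List.mem_cons.mp hl with rfl | hl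
      · exact ha
      · exact h1 l hl
    · -- `a` survives, so `a = la` and the rest is empty
      rw [msub_singleton_of_notMem ha] at h
      have h' : a ::ₘ msub (msub (lexmax r σ0) (ds r ({a} : Set β)))
          (ds r ({lb} : Set β)) = la ::ₘ 0 := by
        simpa [Multiset.singleton_add] using h
      rcases Multiset.cons_eq_cons.mp h' with ⟨rfl, hrest⟩ | ⟨_, u, _, hu⟩
      · -- a = la, rest = 0
        have hall : ∀ x ∈ lexmax r σ0,
            x ∈ ds r ({a, lb} : Set β) := by
          intro x hx
          by_cases hxa : x ∈ ds r ({a} : Set β)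
          · exact mem_ds_pair.mpr (Or.inl (mem_ds_singleton.mp hxa))
          · have hx1 : x ∈ msub (lexmax r σ0) (ds r ({a} : Set β)) :=
              mem_msub.mpr ⟨hx, hxa⟩
            have hx2 : x ∈ ds r ({lb} : Set β) := by
              by_contra hxb
              have : x ∈ msub (msub (lexmax r σ0) (ds r ({a} : Set β)))
                  (ds r ({lb} : Set β)) := mem_msub.mpr ⟨hx1, hxb⟩
              rw [hrest] at this
              simp at this
            exact mem_ds_pair.mpr (Or.inr (mem_ds_singleton.mp hx2))
        exact ⟨[], σ0, by simp, by simp, lexmax_dom_set htrans hall⟩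
      · exact absurd hu.symm (by simp)

end Aux

/-- local decreasingness yields a decomposition of the joining
sequence of labels -/
theorem mulLe_imp_decomposition {β : Type v} (r : β → β → Prop)
    (htrans : Transitive r) (hirrefl : Irreflexive r)
    (la lb : β) (σ' : List β)
    (h : mulLe r (msub (lexmax r σ') (ds r ({lb} : Set β))) ({la} : Multiset β)) :
    ∃ σ1 σ2 σ3 : List β, σ' = σ1 ++ σ2 ++ σ3 ∧
      (∀ l ∈ σ1, l ∈ ds r ({lb} : Set β)) ∧
      σ2.length ≤ 1 ∧ (∀ l ∈ σ2, l = la) ∧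
      (∀ l ∈ σ3, l ∈ ds r ({la, lb} : Set β)) := by
  obtain ⟨I, J, K, hM, hIJ, hK⟩ := h
  have hcard : Multiset.card I + Multiset.card J = 1 := by
    simpa using congrArg Multiset.card hIJ.symm
  rcases Nat.add_eq_one_iff.mp hcard with ⟨hI, hJ⟩ | ⟨hI, hJ⟩
  · -- I = 0, J = {la}: every element of the filtered multiset is below la
    have hI0 : I = 0 := Multiset.card_eq_zero.mp hI
    have hJla : J = ({la} : Multiset β) := by
      rw [hI0, zero_add] at hIJ; exact hIJ.symm
    subst hI0 hJla
    rw [zero_add] at hM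
    have hall : ∀ x ∈ lexmax r σ', x ∈ ds r ({la, lb} : Set β) := by
      intro x hx
      by_cases hxb : x ∈ ds r ({lb} : Set β)
      · exact mem_ds_pair.mpr (Or.inr (mem_ds_singleton.mp hxb))
      · have hxK : x ∈ K := by
          rw [← hM]; exact mem_msub.mpr ⟨hx, hxb⟩
        have := hK x hxK
        simp only [dm, ds, Set.mem_setOf_eq, Multiset.mem_singleton] at this
        obtain ⟨a, rfl, hra⟩ := this
        exact mem_ds_pair.mpr (Or.inl hra)
    exact ⟨[], [], σ', by simp, by simp, by simp, by simp,
      lexmax_dom_set htrans hall⟩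
  · -- J = 0: K = 0 and the filtered multiset equals {la}
    have hJ0 : J = 0 := Multiset.card_eq_zero.mp hJ
    subst hJ0
    have hK0 : K = 0 := by
      rw [Multiset.eq_zero_iff_forall_notMem]
      intro x hx
      have := hK x hx
      simp [dm, ds] at this
    subst hK0
    rw [add_zero] at hM hIJ
    rcases decomposition_of_eq_singleton htrans la lb σ' (hM.trans hIJ.symm)
      with ⟨σ1, σ3, heq, h1, h3⟩
    exact ⟨σ1, [la], σ3, heq, h1, by simp, by simp, h3⟩
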